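/- For every κ > 0 and p ≥ 2, A_p'(κ) > 0; that is, the Bessel function ratio A_p(κ) = I_{p/2}(κ)/I_{p/2-1}(κ) is strictly increasing on (0, ∞). -/

import Mathlib

/-!
Write `I_v(κ) = (κ/2)^v g_v(κ²/4)` with the entire series `g_v(x) = ∑ xⁱ / (i! Γ(i+v+1))`.
Then `g_v' = g_{v+1}` and `g_{v-1} = v g_v + x g_{v+1}`, and with `P = g_v`, `Q = g_{v-1}`,
`x = κ²/4` the quotient rule gives `A_{2v}'(κ) = N(x) / Q(x)²` for `N = Q² - (v - 1/2) P Q - x P²`.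
Two monotonicity arguments show `N > 0`: the function `F = Q² - x P²` has `F' = (2v - 1) P² ≥ 0`
and `F(0) > 0`, and `(x^v N)' = x^(v-1) F / 2`, so `x^v N` increases from its value `0` at `x = 0`.
-/

open Real

/-- Modified Bessel function of the first kind, `I_v(κ)`. -/
noncomputable def besselI (v κ : ℝ) : ℝ :=
  ∑' q : ℕ, (1 / (q.factorial * Real.Gamma (q + v + 1))) * (κ / 2) ^ ((2 * q : ℝ) + v)

/-- The Bessel ratio `A_p(κ) = I_{p/2}(κ) / I_{p/2-1}(κ)`. -/
noncomputable def Ap (p : ℕ) (κ : ℝ) : ℝ :=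
  besselI (p / 2 : ℝ) κ / besselI ((p / 2 : ℝ) - 1) κ

noncomputable def besselCoeff (μ : ℝ) (i : ℕ) : ℝ := 1 / (i.factorial * Gamma (i + μ + 1))

noncomputable def besselSeries (μ x : ℝ) : ℝ := ∑' i : ℕ, besselCoeff μ i * x ^ i

section
variable {μ : ℝ}

theorem besselCoeff_pos (hμ : 0 ≤ μ) (i : ℕ) : 0 < besselCoeff μ i := by
  have := Gamma_pos_of_pos (by positivity : (0 : ℝ) < i + μ + 1)
  unfold besselCoeff
  positivity

theorem succ_mul_besselCoeff_succ (hμ : 0 ≤ μ) (i : ℕ) :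
    (i + 1) * besselCoeff μ (i + 1) = besselCoeff (μ + 1) i := by
  have hi : (0 : ℝ) < i + μ + 1 := by positivity
  have := Gamma_pos_of_pos hi
  simp only [besselCoeff, Nat.factorial_succ, Nat.cast_mul, Nat.cast_succ]
  rw [show (i : ℝ) + 1 + μ + 1 = i + μ + 1 + 1 by ring,
    show (i : ℝ) + (μ + 1) + 1 = i + μ + 1 + 1 by ring, Gamma_add_one hi.ne']
  field_simp

theorem besselCoeff_sub_one (hμ : 0 < μ) (i : ℕ) :
    besselCoeff (μ - 1) i = (i + μ) * besselCoeff μ i := by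
  have hi : (0 : ℝ) < i + μ := by positivity
  have := Gamma_pos_of_pos hi
  rw [besselCoeff, besselCoeff, show (i : ℝ) + (μ - 1) + 1 = i + μ by ring,
    Gamma_add_one hi.ne']
  field_simp

theorem besselCoeff_le (hμ : 0 ≤ μ) (i : ℕ) :
    besselCoeff μ i ≤ besselCoeff μ 0 / i.factorial := by
  induction i with
  | zero => simp
  | succ i ih =>
    have hrec : besselCoeff μ i = (i + 1) * (i + μ + 1) * besselCoeff μ (i + 1) := by
      have := besselCoeff_sub_one (μ := μ + 1) (by positivity) i
      rw [add_sub_cancel_right] at this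
      rw [this, ← succ_mul_besselCoeff_succ hμ]
      ring
    have hpos := besselCoeff_pos hμ (i + 1)
    rw [Nat.factorial_succ, Nat.cast_mul, mul_comm, ← div_div, Nat.cast_succ,
      le_div_iff₀ (by positivity)]
    calc besselCoeff μ (i + 1) * (i + 1) ≤ besselCoeff μ i := by
          rw [hrec]; nlinarith [mul_nonneg hpos.le (by positivity : (0 : ℝ) ≤ (i + 1) * (i + μ))]
      _ ≤ besselCoeff μ 0 / i.factorial := ih

theorem summable_besselCoeff_mul_pow (hμ : 0 ≤ μ) (x : ℝ) :
    Summable fun i => besselCoeff μ i * x ^ i := by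
  refine ((summable_pow_div_factorial |x|).mul_left (besselCoeff μ 0)).of_norm_bounded fun i => ?_
  rw [norm_mul, norm_pow, norm_of_nonneg (besselCoeff_pos hμ i).le, norm_eq_abs]
  calc besselCoeff μ i * |x| ^ i ≤ besselCoeff μ 0 / i.factorial * |x| ^ i := by
        gcongr; exact besselCoeff_le hμ i
    _ = besselCoeff μ 0 * (|x| ^ i / i.factorial) := by ring

theorem besselSeries_pos (hμ : 0 ≤ μ) {x : ℝ} (hx : 0 ≤ x) : 0 < besselSeries μ x :=
  (summable_besselCoeff_mul_pow hμ x).tsum_pos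
    (fun i => mul_nonneg (besselCoeff_pos hμ i).le (pow_nonneg hx i)) 0
    (by simpa using besselCoeff_pos hμ 0)

theorem hasSum_besselSeries_add_one (hμ : 0 ≤ μ) (x : ℝ) :
    HasSum (fun n : ℕ => n * besselCoeff μ n * x ^ (n - 1)) (besselSeries (μ + 1) x) := by
  rw [← hasSum_nat_add_iff' 1]
  simpa [besselSeries, succ_mul_besselCoeff_succ hμ] using
    (summable_besselCoeff_mul_pow (μ := μ + 1) (by positivity) x).hasSum

theorem hasDerivAt_besselSeries (hμ : 0 ≤ μ) (x : ℝ) :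
    HasDerivAt (besselSeries μ) (besselSeries (μ + 1) x) x := by
  set R := |x| + 1
  have hx : x ∈ Set.Ioo (-R) R := abs_lt.mp (by simp [R])
  have key := hasDerivAt_tsum_of_isPreconnected (g := fun n y => besselCoeff μ n * y ^ n)
    (g' := fun n y => n * besselCoeff μ n * y ^ (n - 1))
    (hasSum_besselSeries_add_one hμ R).summable isOpen_Ioo (convex_Ioo _ _).isPreconnected
    (fun n y _ => by simpa [mul_assoc, mul_comm, mul_left_comm] using
      (hasDerivAt_pow n y).const_mul (besselCoeff μ n))
    (fun n y hy => by
      rw [norm_mul, norm_mul, norm_pow, Real.norm_natCast,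
        norm_of_nonneg (besselCoeff_pos hμ n).le, norm_eq_abs]
      exact mul_le_mul_of_nonneg_left (pow_le_pow_left₀ (abs_nonneg y) (abs_lt.mpr hy).le _)
        (mul_nonneg n.cast_nonneg (besselCoeff_pos hμ n).le))
    hx (summable_besselCoeff_mul_pow hμ x) hx
  rwa [(hasSum_besselSeries_add_one hμ x).tsum_eq] at key

theorem besselSeries_sub_one (hμ : 0 < μ) (x : ℝ) :
    besselSeries (μ - 1) x = μ * besselSeries μ x + x * besselSeries (μ + 1) x := by
  have hshift :
      HasSum (fun n : ℕ => n * besselCoeff μ n * x ^ n) (x * besselSeries (μ + 1) x) := by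
    rw [← hasSum_nat_add_iff' 1]
    simpa [besselSeries, succ_mul_besselCoeff_succ hμ.le, pow_succ, mul_assoc, mul_comm,
      mul_left_comm] using
      ((summable_besselCoeff_mul_pow (μ := μ + 1) (by positivity) x).hasSum.mul_left x)
  refine (((summable_besselCoeff_mul_pow hμ.le x).hasSum.mul_left μ).add hshift).tsum_eq ▸ ?_
  exact tsum_congr fun n => by rw [besselCoeff_sub_one hμ]; ring

theorem besselI_eq_besselSeries (μ : ℝ) {κ : ℝ} (hκ : 0 < κ) :
    besselI μ κ = (κ / 2) ^ μ * besselSeries μ (κ ^ 2 / 4) := by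
  rw [besselI, besselSeries, ← tsum_mul_left]
  refine tsum_congr fun q => ?_
  rw [rpow_add (by positivity), show (2 * q : ℝ) = ((2 * q : ℕ) : ℝ) by push_cast; ring,
    rpow_natCast, pow_mul, besselCoeff]
  ring

end

noncomputable def derivNumerator (v x : ℝ) : ℝ :=
  besselSeries (v - 1) x ^ 2 - (v - 1 / 2) * (besselSeries v x * besselSeries (v - 1) x)
    - x * besselSeries v x ^ 2

section
variable {v : ℝ}

theorem hasDerivAt_besselSeries_sub_one (hv : 1 ≤ v) (x : ℝ) :
    HasDerivAt (besselSeries (v - 1)) (besselSeries v x) x := by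
  simpa using hasDerivAt_besselSeries (μ := v - 1) (by linarith) x

theorem mul_besselSeries_sq_lt (hv : 1 ≤ v) {x : ℝ} (hx : 0 ≤ x) :
    x * besselSeries v x ^ 2 < besselSeries (v - 1) x ^ 2 := by
  set F := fun y => besselSeries (v - 1) y ^ 2 - y * besselSeries v y ^ 2
  have hF : ∀ y, HasDerivAt F ((2 * v - 1) * besselSeries v y ^ 2) y := fun y => by
    refine (((hasDerivAt_besselSeries_sub_one hv y).pow 2).sub
      ((hasDerivAt_id y).mul ((hasDerivAt_besselSeries (by linarith) y).pow 2))).congr_deriv ?_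
    rw [besselSeries_sub_one (by linarith) y]
    simp only [Nat.cast_ofNat, Nat.add_one_sub_one, pow_one, Pi.pow_apply, one_mul, id_eq]
    ring
  have hmono : Monotone F := monotone_of_deriv_nonneg (fun y => (hF y).differentiableAt)
    fun y => (hF y).deriv ▸ mul_nonneg (by linarith) (sq_nonneg _)
  have hF0 := hmono hx
  have hQ0 := besselSeries_pos (μ := v - 1) (by linarith) le_rfl
  simp only [F, zero_mul, sub_zero] at hF0
  linarith [pow_pos hQ0 2]

theorem derivNumerator_pos (hv : 1 ≤ v) {x : ℝ} (hx : 0 < x) : 0 < derivNumerator v x := by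
  have hN : ∀ y, HasDerivAt (derivNumerator v) _ y := fun y =>
    (((hasDerivAt_besselSeries_sub_one hv y).pow 2).sub
      (((hasDerivAt_besselSeries (by linarith) y).mul
        (hasDerivAt_besselSeries_sub_one hv y)).const_mul (v - 1 / 2))).sub
      ((hasDerivAt_id y).mul ((hasDerivAt_besselSeries (by linarith) y).pow 2))
  set M := fun y => y ^ v * derivNumerator v y
  have hM : ∀ y, HasDerivAt M _ y := fun y => (hasDerivAt_rpow_const (Or.inr hv)).mul (hN y)
  have hM' : ∀ y, 0 < y →
      deriv M y = y ^ (v - 1) * (besselSeries (v - 1) y ^ 2 - y * besselSeries v y ^ 2) / 2 := by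
    intro y hy
    rw [(hM y).deriv, rpow_sub_one hy.ne', derivNumerator, besselSeries_sub_one (by linarith) y]
    field_simp
    simp only [Nat.cast_ofNat, Nat.add_one_sub_one, pow_one, id_eq]
    ring
  have hmono : StrictMonoOn M (Set.Ici 0) := by
    refine strictMonoOn_of_deriv_pos (convex_Ici 0)
      (continuous_iff_continuousAt.mpr fun y => (hM y).continuousAt).continuousOn fun y hy => ?_
    rw [interior_Ici] at hy
    rw [hM' y hy]
    exact div_pos (mul_pos (rpow_pos_of_pos hy _) (sub_pos.mpr (mul_besselSeries_sq_lt hv hy.le)))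
      two_pos
  have hM0 := hmono Set.self_mem_Ici hx.le hx
  simp only [M, zero_rpow (by linarith : v ≠ 0), zero_mul] at hM0
  exact pos_of_mul_pos_right hM0 (rpow_pos_of_pos hx v).le

theorem hasDerivAt_besselI_div (hv : 1 ≤ v) {κ : ℝ} (hκ : 0 < κ) :
    HasDerivAt (fun κ => besselI v κ / besselI (v - 1) κ)
      (derivNumerator v (κ ^ 2 / 4) / besselSeries (v - 1) (κ ^ 2 / 4) ^ 2) κ := by
  have hsq : HasDerivAt (fun y : ℝ => y ^ 2 / 4) (κ / 2) κ :=
    ((hasDerivAt_pow 2 κ).div_const 4).congr_deriv (by simp; ring)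
  have hP := (hasDerivAt_besselSeries (μ := v) (by linarith) _).comp κ hsq
  have hQ := (hasDerivAt_besselSeries_sub_one hv _).comp κ hsq
  have hQpos := besselSeries_pos (μ := v - 1) (by linarith) (by positivity : 0 ≤ κ ^ 2 / 4)
  have hlocal : (fun κ => besselI v κ / besselI (v - 1) κ) =ᶠ[nhds κ]
      fun y => y / 2 * (besselSeries v (y ^ 2 / 4) / besselSeries (v - 1) (y ^ 2 / 4)) := by
    filter_upwards [Ioi_mem_nhds hκ] with y hy
    rw [besselI_eq_besselSeries v hy, besselI_eq_besselSeries (v - 1) hy, mul_div_mul_comm,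
      ← rpow_sub (half_pos hy), sub_sub_cancel, rpow_one]
  refine ((((hasDerivAt_id κ).div_const 2).mul (hP.div hQ hQpos.ne')).congr_of_eventuallyEq
    hlocal).congr_deriv ?_
  have hrec := besselSeries_sub_one (μ := v) (by linarith) (κ ^ 2 / 4)
  simp only [Pi.div_apply, Function.comp_apply, id, derivNumerator]
  field_simp
  linear_combination -16 * besselSeries (v - 1) (κ ^ 2 / 4) * hrec

end

theorem stmt_7 (p : ℕ) (hp : 2 ≤ p) :
    (∀ κ : ℝ, 0 < κ → 0 < deriv (Ap p) κ) ∧ StrictMonoOn (Ap p) (Set.Ioi 0) := by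
  have hv : 1 ≤ (p : ℝ) / 2 := by
    rw [le_div_iff₀ two_pos]
    exact_mod_cast hp
  have hA : ∀ κ : ℝ, 0 < κ → HasDerivAt (Ap p) _ κ := fun κ hκ => hasDerivAt_besselI_div hv hκ
  have hderiv : ∀ κ : ℝ, 0 < κ → 0 < deriv (Ap p) κ := fun κ hκ =>
    (hA κ hκ).deriv ▸ div_pos (derivNumerator_pos hv (by positivity))
      (pow_pos (besselSeries_pos (by linarith) (by positivity)) 2)
  refine ⟨hderiv, strictMonoOn_of_deriv_pos (convex_Ioi 0)
    (fun κ hκ => (hA κ hκ).continuousAt.continuousWithinAt) ?_⟩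
  exact fun κ hκ => hderiv κ (interior_subset hκ)
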